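/- Let G be a finite simple graph with n ≥ 1 vertices and m edges, let M ≥ 1 and t be natural numbers, and let G' be the simple graph defined as follows: the vertex set of G' is V(G) ⊎ K where |K| = M·n; two vertices of V(G) are adjacent in G' iff they are distinct and non-adjacent in G; any two distinct vertices of K are adjacent in G'; and every vertex of K is adjacent in G' to every vertex of V(G). If G has a cut of size at least t, then G' admits a linear arrangement π whose cost satisfies cost(π) + t·M·n ≤ binom((M+1)·n + 1, 3). -/

import Mathlib

open Classical

/-- The graph `G'` of the reduction of Garey, Johnson and Stockmeyer: the complement of
`G` together with a clique `K` on `N` fresh vertices that is fully connected to the rest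
of the graph. -/
def gareyGraph {V : Type*} (G : SimpleGraph V) (N : ℕ) : SimpleGraph (V ⊕ Fin N) where
  Adj x y := x ≠ y ∧ ∀ u v, x = Sum.inl u → y = Sum.inl v → ¬ G.Adj u v
  symm := by
    constructor
    rintro x y ⟨hne, h⟩
    exact ⟨hne.symm, fun u v hy hx hadj => h v u hx hy (G.adj_symm hadj)⟩
  loopless := ⟨fun x h => h.1 rfl⟩

/-- The cost of the vertex placement `f : V → ℤ` for the simple graph `G`: the sum over
all edges `{u, v}` of `G` of `|f u - f v|`. -/
noncomputable def lincost {V : Type*} [Fintype V] [DecidableEq V]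
    (G : SimpleGraph V) (f : V → ℤ) : ℤ :=
  ∑ e ∈ Finset.univ.filter (fun e : Sym2 V => e ∈ G.edgeSet),
    Sym2.lift ⟨fun u v => |f u - f v|, fun u v => abs_sub_comm (f u) (f v)⟩ e

/-- The size of the cut determined by `S` in the simple graph `G`: the number of edges of
`G` with exactly one endpoint in `S`. -/
noncomputable def cutSizeS {V : Type*} [Fintype V] [DecidableEq V]
    (G : SimpleGraph V) (S : Finset V) : ℕ :=
  (Finset.univ.filter fun e : Sym2 V =>
    e ∈ G.edgeSet ∧ ∃ u v, e = s(u, v) ∧ u ∈ S ∧ v ∉ S).card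

/-!
Every linear arrangement of a complete graph on `N` vertices costs `C(N + 1, 3)`, and `G'` is the
complete graph on `V ⊕ K` with the edges of `G` removed. Placing `S` first, then `K`, then the rest
of `V` stretches every cut edge of `G` across all of `K`, so removing the `t` cut edges alone saves
at least `t · |K| = t · M · n`.
-/

open Finset

def stretch {V : Type*} (f : V → ℤ) : Sym2 V → ℤ :=
  Sym2.lift ⟨fun u v => |f u - f v|, fun u v => abs_sub_comm (f u) (f v)⟩

@[simp]
lemma stretch_mk {V : Type*} (f : V → ℤ) (u v : V) : stretch f s(u, v) = |f u - f v| := rfl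

lemma stretch_nonneg {V : Type*} (f : V → ℤ) (e : Sym2 V) : 0 ≤ stretch f e := by
  induction e with | _ u v => exact abs_nonneg _

lemma stretch_map {V W : Type*} (f : W → ℤ) (g : V → W) (e : Sym2 V) :
    stretch f (e.map g) = stretch (f ∘ g) e := by
  induction e with | _ u v => rfl

lemma map_top_of_equiv {V W : Type*} (π : V ≃ W) : (⊤ : SimpleGraph V).map π.toEmbedding = ⊤ := by
  ext x y
  rw [SimpleGraph.map_adj]
  constructor
  · rintro ⟨u, v, huv, rfl, rfl⟩
    exact π.injective.ne huv
  · intro hxy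
    exact ⟨π.symm x, π.symm y, by simpa using hxy, by simp, by simp⟩

lemma gareyGraph_eq_top_sdiff_map {V : Type*} (G : SimpleGraph V) (N : ℕ) :
    gareyGraph G N = ⊤ \ G.map (Function.Embedding.inl : V ↪ V ⊕ Fin N) := by
  ext x y
  simp only [gareyGraph, SimpleGraph.sdiff_adj, SimpleGraph.top_adj, SimpleGraph.map_adj,
    Function.Embedding.inl_apply]
  constructor
  · rintro ⟨hne, h⟩
    exact ⟨hne, fun ⟨u, v, huv, hx, hy⟩ => h u v hx.symm hy.symm huv⟩
  · rintro ⟨hne, h⟩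
    exact ⟨hne, fun u v hx hy huv => h ⟨u, v, huv, hx.symm, hy.symm⟩⟩

section lincost

variable {V W : Type*} [Fintype V] [DecidableEq V] [Fintype W] [DecidableEq W]

lemma lincost_eq_sum_stretch (G : SimpleGraph V) (f : V → ℤ) :
    lincost G f = ∑ e ∈ univ.filter (· ∈ G.edgeSet), stretch f e := rfl

lemma lincost_eq_sum_stretch_of_mem_iff {G : SimpleGraph V} {s : Finset (Sym2 V)}
    (hs : ∀ e, e ∈ s ↔ e ∈ G.edgeSet) (f : V → ℤ) : lincost G f = ∑ e ∈ s, stretch f e := by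
  rw [lincost_eq_sum_stretch]
  congr 1
  ext e
  simp [hs]

lemma lincost_sdiff_add_lincost {H₁ H₂ : SimpleGraph V} (h : H₁ ≤ H₂) (f : V → ℤ) :
    lincost (H₂ \ H₁) f + lincost H₁ f = lincost H₂ f := by
  simp only [lincost_eq_sum_stretch, sum_filter, ← sum_add_distrib]
  refine sum_congr rfl fun e _ => ?_
  have := SimpleGraph.edgeSet_mono h (a := e)
  by_cases h₁ : e ∈ H₁.edgeSet <;> by_cases h₂ : e ∈ H₂.edgeSet <;>
    simp_all [SimpleGraph.edgeSet_sdiff]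

lemma lincost_map (g : V ↪ W) (G : SimpleGraph V) (f : W → ℤ) :
    lincost (G.map g) f = lincost G (f ∘ g) := by
  rw [lincost_eq_sum_stretch_of_mem_iff (s := (univ.filter (· ∈ G.edgeSet)).map g.sym2Map)
    (by simp [SimpleGraph.edgeSet_map]), sum_map]
  exact sum_congr rfl fun e _ => stretch_map f g e

lemma cutSizeS_mul_le_lincost (G : SimpleGraph V) (S : Finset V) (f : V → ℤ) {k : ℤ}
    (hk : ∀ u ∈ S, ∀ v ∉ S, G.Adj u v → k ≤ |f u - f v|) :
    cutSizeS G S * k ≤ lincost G f := by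
  set C := univ.filter fun e : Sym2 V => e ∈ G.edgeSet ∧ ∃ u v, e = s(u, v) ∧ u ∈ S ∧ v ∉ S
  have hC : ∀ e ∈ C, k ≤ stretch f e := by
    intro e he
    obtain ⟨hadj, u, v, rfl, hu, hv⟩ := (mem_filter.mp he).2
    exact hk u hu v hv hadj
  calc (cutSizeS G S : ℤ) * k = C.card • k := by rw [nsmul_eq_mul]; rfl
    _ ≤ ∑ e ∈ C, stretch f e := card_nsmul_le_sum C _ k hC
    _ ≤ lincost G f := by
      refine sum_le_sum_of_subset_of_nonneg (fun e he => ?_) fun e _ _ => stretch_nonneg f e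
      simp only [C, mem_filter] at he ⊢
      exact ⟨mem_univ e, he.2.1⟩

end lincost

lemma sum_range_sub_eq_choose_two (j : ℕ) : ∑ i ∈ range j, (j - i) = (j + 1).choose 2 := by
  induction j with
  | zero => rfl
  | succ j ih =>
    rw [sum_range_succ', Nat.choose_succ_succ' (j + 1)]
    simp [ih, add_comm]

lemma sum_range_sum_range_sub_eq_choose_three (N : ℕ) :
    ∑ j ∈ range N, ∑ i ∈ range j, (j - i) = (N + 1).choose 3 := by
  induction N with
  | zero => rfl
  | succ N ih =>
    rw [sum_range_succ, ih, sum_range_sub_eq_choose_two, Nat.choose_succ_succ' (N + 1) 2, add_comm]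

lemma lincost_top_fin (N : ℕ) :
    lincost (⊤ : SimpleGraph (Fin N)) (fun i => (i : ℤ)) = (N + 1).choose 3 := by
  rw [lincost_eq_sum_stretch_of_mem_iff (s := univ.sym2.filter (fun e => ¬ e.IsDiag)) (by simp),
    sum_sym2_filter_not_isDiag]
  have hpairs : univ.offDiag.filter (fun p : Fin N × Fin N => p.1 < p.2) =
      univ.filter (fun p : Fin N × Fin N => p.1 < p.2) := by
    ext p
    simpa using fun h : p.1 < p.2 => h.ne
  have hinner (j : Fin N) :
      ∑ i ∈ Iio j, |((i : ℕ) : ℤ) - (j : ℕ)| = ((∑ i ∈ range j, (j - i) : ℕ) : ℤ) := by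
    rw [← Nat.Iio_eq_range, ← Fin.map_valEmbedding_Iio, sum_map, Nat.cast_sum]
    refine sum_congr rfl fun i hi => ?_
    have : (i : ℕ) < j := Fin.lt_def.mp (mem_Iio.mp hi)
    simp [abs_of_neg, this, Nat.cast_sub this.le]
  rw [hpairs, sum_filter, Fintype.sum_prod_type_right]
  simp only [← sum_filter, filter_gt_eq_Iio, stretch_mk, hinner]
  rw [Fin.sum_univ_eq_sum_range (fun j => ((∑ i ∈ range j, (j - i) : ℕ) : ℤ)), ← Nat.cast_sum,
    sum_range_sum_range_sub_eq_choose_three]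

lemma lincost_top_of_equiv {V : Type*} [Fintype V] [DecidableEq V] {N : ℕ} (π : V ≃ Fin N) :
    lincost ⊤ (fun v => ((π v : ℕ) : ℤ)) = (N + 1).choose 3 := by
  rw [← lincost_top_fin N, ← map_top_of_equiv π, lincost_map]
  rfl

section cutArrangement

variable {V : Type*} [Fintype V] [DecidableEq V] (S : Finset V) (K : ℕ)

lemma card_add_card_add_card_not_mem :
    #S + (K + Fintype.card {v // v ∉ S}) = Fintype.card V + K := by
  rw [Fintype.card_subtype_compl, Fintype.card_coe]
  have := card_le_univ S
  omega

/-- The arrangement listing `S`, then the `K` new vertices, then the complement of `S`. -/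
noncomputable def cutArrangement : V ⊕ Fin K ≃ Fin (Fintype.card V + K) :=
  ((Equiv.sumCongr (Equiv.sumCompl (· ∈ S)).symm (Equiv.refl (Fin K))).trans <|
    (Equiv.sumAssoc _ _ _).trans <|
    (Equiv.sumCongr (Equiv.refl _) (Equiv.sumComm _ _)).trans <|
    (Equiv.sumCongr S.equivFin (Equiv.sumCongr (Equiv.refl _) (Fintype.equivFin _))).trans <|
    (Equiv.sumCongr (Equiv.refl _) finSumFinEquiv).trans finSumFinEquiv).trans
    (finCongr (card_add_card_add_card_not_mem S K))

lemma cutArrangement_inl_lt {u : V} (hu : u ∈ S) : (cutArrangement S K (.inl u) : ℕ) < #S := by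
  simp [cutArrangement, Equiv.sumCompl_symm_apply_of_pos (p := (· ∈ S)) hu]

lemma le_cutArrangement_inl {v : V} (hv : v ∉ S) : #S + K ≤ (cutArrangement S K (.inl v) : ℕ) := by
  simp [cutArrangement, Equiv.sumCompl_symm_apply_of_neg (p := (· ∈ S)) hv]

lemma le_abs_cutArrangement_inl_sub {u v : V} (hu : u ∈ S) (hv : v ∉ S) :
    (K : ℤ) ≤ |((cutArrangement S K (.inl u) : ℕ) : ℤ) - (cutArrangement S K (.inl v) : ℕ)| := by
  have := cutArrangement_inl_lt S K hu
  have := le_cutArrangement_inl S K hv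
  rw [abs_sub_comm, abs_of_pos] <;> omega

end cutArrangement

theorem maxcut_to_ola_forward {V : Type*} [Fintype V] [DecidableEq V]
    (G : SimpleGraph V)
    (n : ℕ) (hn : n = Fintype.card V)
    (M t : ℕ)
    (hcut : ∃ S : Finset V, t ≤ cutSizeS G S) :
    ∃ π : (V ⊕ Fin (M * n)) ≃ Fin (n + M * n),
      lincost (gareyGraph G (M * n)) (fun v => ((π v : ℕ) : ℤ)) + (t * M * n : ℕ) ≤
        (Nat.choose ((M + 1) * n + 1) 3 : ℤ) := by
  obtain ⟨S, hS⟩ := hcut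
  subst hn
  set K := M * Fintype.card V
  let f : V ⊕ Fin K → ℤ := fun x => ((cutArrangement S K x : ℕ) : ℤ)
  have hsplit := lincost_sdiff_add_lincost (le_top : G.map Function.Embedding.inl ≤ ⊤) f
  rw [← gareyGraph_eq_top_sdiff_map, lincost_top_of_equiv, lincost_map] at hsplit
  have hcutcost : cutSizeS G S * (K : ℤ) ≤ lincost G (f ∘ Function.Embedding.inl) :=
    cutSizeS_mul_le_lincost G S _ fun u hu v hv _ => le_abs_cutArrangement_inl_sub S K hu hv
  have htK : ((t * M * Fintype.card V : ℕ) : ℤ) ≤ cutSizeS G S * K := by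
    rw [mul_assoc]
    exact_mod_cast Nat.mul_le_mul_right K hS
  refine ⟨cutArrangement S K, ?_⟩
  rw [show (M + 1) * Fintype.card V = Fintype.card V + K by ring]
  linarith
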